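/- If G is a group of order 16 generated by two elements x, y satisfying x⁴ = 1, y⁴ = 1, and y⁻¹xy = x⁻¹ (so G ≅ C₄ ⋊ C₄), then G is not a Cayley integral group. -/

import Mathlib

open scoped Classical

/-- The adjacency matrix of the undirected Cayley graph `Cay(G,S)`:
the `(a,b)` entry is `1` if `a * b⁻¹ ∈ S` and `0` otherwise. -/
noncomputable def cayleyAdjMatrix {G : Type*} [Group G] [Fintype G] (S : Set G) :
    Matrix G G ℝ :=
  Matrix.of fun a b => if a * b⁻¹ ∈ S then (1 : ℝ) else 0

/-- A finite group `G` is *Cayley integral* if for every subset `S ⊆ G` with `1 ∉ S` and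
`S = S⁻¹`, every eigenvalue of the adjacency matrix of the Cayley graph `Cay(G,S)`
is an integer. -/
def IsCayleyIntegral (G : Type*) [Group G] [Fintype G] : Prop :=
  ∀ S : Set G, (1 : G) ∉ S → (∀ s ∈ S, s⁻¹ ∈ S) →
    ∀ μ ∈ spectrum ℝ (cayleyAdjMatrix S), ∃ k : ℤ, μ = (k : ℝ)

/-!
Writing every element of `G` as `x ^ a * y ^ b` with `a b : ZMod 4` identifies `G` with an explicit
semidirect product on `ZMod 4 × ZMod 4`, and Cayley integrality is invariant under isomorphism.
Take `S = {y, y⁻¹, xy, (xy)⁻¹}`. Modulo the central subgroup `⟨y²⟩` the group is dihedral of order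
8, and `S` maps two-to-one onto two reflections generating it, whose Cayley graph is the 8-cycle.
Lifting the eigenvector of the 8-cycle for its eigenvalue `√2` gives an eigenvector of `Cay(G, S)`
with the irrational eigenvalue `2√2`; its entries lie in `ℤ[√2]`, where the eigen-equation is a
finite computation.
-/

open Matrix Zsqrtd

section CayleyIntegral

variable {G H : Type*} [Group G] [Fintype G] [Group H] [Fintype H]

lemma cayleyAdjMatrix_image_mulEquiv (e : H ≃* G) (S : Set H) :
    cayleyAdjMatrix (e '' S) = reindex e.toEquiv e.toEquiv (cayleyAdjMatrix S) := by
  ext a b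
  obtain ⟨a, rfl⟩ := e.surjective a
  obtain ⟨b, rfl⟩ := e.surjective b
  simp [cayleyAdjMatrix, ← map_inv, ← map_mul]

lemma IsCayleyIntegral.of_mulEquiv (e : H ≃* G) (hG : IsCayleyIntegral G) :
    IsCayleyIntegral H := by
  intro S h1 hinv μ hμ
  refine hG (e '' S) ?_ ?_ μ ?_
  · rintro ⟨s, hs, hes⟩
    exact h1 (e.map_eq_one_iff.mp hes ▸ hs)
  · rintro _ ⟨s, hs, rfl⟩
    exact ⟨s⁻¹, hinv s hs, map_inv e s⟩
  · rwa [cayleyAdjMatrix_image_mulEquiv, ← coe_reindexAlgEquiv ℝ ℝ, AlgEquiv.spectrum_eq]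

lemma not_isCayleyIntegral_of_irrational_mem_spectrum [DecidableEq G] {S : Set G} (h1 : 1 ∉ S)
    (hinv : ∀ s ∈ S, s⁻¹ ∈ S) {μ : ℝ} (hμ : μ ∈ spectrum ℝ (cayleyAdjMatrix S))
    (hirr : Irrational μ) : ¬ IsCayleyIntegral G := fun h => by
  obtain ⟨k, rfl⟩ := h S h1 hinv μ (by convert hμ)
  exact hirr.ne_int k rfl

end CayleyIntegral

section Spectrum

variable {n R S : Type*} [Fintype n] [DecidableEq n] [CommRing R] [CommRing S]

lemma Matrix.mem_spectrum_of_mulVec_eq_smul {A : Matrix n n R} {v : n → R} {μ : R} (hv : v ≠ 0)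
    (hAv : A *ᵥ v = μ • v) : μ ∈ spectrum R A := by
  rw [← spectrum_toLin']
  exact (Module.End.hasEigenvalue_of_hasEigenvector
    ⟨Module.End.mem_eigenspace_iff.mpr (by rwa [toLin'_apply]), hv⟩).mem_spectrum

lemma Matrix.mem_spectrum_map_of_mulVec_eq_smul (f : R →+* S) {A : Matrix n n R} {v : n → R}
    {μ : R} (hv : f ∘ v ≠ 0) (hAv : A *ᵥ v = μ • v) : f μ ∈ spectrum S (A.map f) := by
  refine mem_spectrum_of_mulVec_eq_smul hv (funext fun i => ?_)
  rw [← RingHom.map_mulVec, hAv]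
  simp

end Spectrum

section Relations

variable {G : Type*} [Group G] {x y : G} {n : ℕ} [NeZero n]

lemma pow_zmod_val_add (hx : x ^ n = 1) (a b : ZMod n) :
    x ^ (a + b).val = x ^ a.val * x ^ b.val := by
  rw [ZMod.val_add, ← pow_eq_pow_mod _ hx, pow_add]

lemma pow_zmod_val_neg (hx : x ^ n = 1) (a : ZMod n) : x ^ (-a).val = (x ^ a.val)⁻¹ :=
  eq_inv_of_mul_eq_one_left <| by
    rw [← pow_zmod_val_add hx, neg_add_cancel, ZMod.val_zero, pow_zero]

lemma pow_mul_pow_zmod_val_of_conj_eq_inv (hx : x ^ n = 1) (hxy : y⁻¹ * x * y = x⁻¹) (m : ℕ)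
    (c : ZMod n) : y ^ m * x ^ c.val = x ^ ((-1) ^ m * c).val * y ^ m := by
  have hsemi : SemiconjBy y x x⁻¹ := by
    have h : SemiconjBy y⁻¹ x x⁻¹ := by rw [SemiconjBy, ← hxy]; group
    simpa using (SemiconjBy.inv_symm_left_iff.mp h).inv_right
  induction m generalizing c with
  | zero => simp
  | succ m ih =>
    calc y ^ (m + 1) * x ^ c.val = y ^ m * (y * x ^ c.val) := by rw [pow_succ, mul_assoc]
      _ = y ^ m * x ^ (-c).val * y := by
        rw [(hsemi.pow_right c.val).eq, inv_pow, ← pow_zmod_val_neg hx, mul_assoc]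
      _ = x ^ ((-1) ^ m * -c).val * y ^ m * y := by rw [ih (-c)]
      _ = x ^ ((-1) ^ (m + 1) * c).val * y ^ (m + 1) := by
        rw [mul_assoc, ← pow_succ, pow_succ (-1 : ZMod n), mul_assoc, neg_one_mul]

end Relations

/-- `C₄ ⋊ C₄` on pairs: `(a, b)` stands for `x ^ a * y ^ b`. -/
def C4RtimesC4 : Type := ZMod 4 × ZMod 4

namespace C4RtimesC4

instance : Fintype C4RtimesC4 := inferInstanceAs (Fintype (ZMod 4 × ZMod 4))

instance : DecidableEq C4RtimesC4 := inferInstanceAs (DecidableEq (ZMod 4 × ZMod 4))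

def mk (a b : ZMod 4) : C4RtimesC4 := (a, b)

instance : Group C4RtimesC4 where
  mul p q := mk (p.1 + (-1) ^ p.2.val * q.1) (p.2 + q.2)
  one := mk 0 0
  inv p := mk (-((-1) ^ p.2.val * p.1)) (-p.2)
  mul_assoc := by decide
  one_mul := by decide
  mul_one := by decide
  inv_mul_cancel := by decide

section Lift

variable {G : Type*} [Group G] {x y : G}

def lift (hx : x ^ 4 = 1) (hy : y ^ 4 = 1) (hxy : y⁻¹ * x * y = x⁻¹) : C4RtimesC4 →* G :=
  MonoidHom.mk' (fun p => x ^ p.1.val * y ^ p.2.val) fun p q => by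
    change x ^ (p.1 + (-1) ^ p.2.val * q.1).val * y ^ (p.2 + q.2).val = _
    simp only [pow_zmod_val_add hx, pow_zmod_val_add hy, mul_assoc]
    rw [← mul_assoc (y ^ p.2.val), pow_mul_pow_zmod_val_of_conj_eq_inv hx hxy, mul_assoc]

lemma lift_mk_one_zero (hx : x ^ 4 = 1) (hy : y ^ 4 = 1) (hxy : y⁻¹ * x * y = x⁻¹) :
    lift hx hy hxy (mk 1 0) = x := by
  simp [lift, mk, show (1 : ZMod 4).val = 1 from rfl]

lemma lift_mk_zero_one (hx : x ^ 4 = 1) (hy : y ^ 4 = 1) (hxy : y⁻¹ * x * y = x⁻¹) :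
    lift hx hy hxy (mk 0 1) = y := by
  simp [lift, mk, show (1 : ZMod 4).val = 1 from rfl]

lemma nonempty_mulEquiv [Fintype G] (hcard : Fintype.card G = 16) (hx : x ^ 4 = 1)
    (hy : y ^ 4 = 1) (hxy : y⁻¹ * x * y = x⁻¹) (hgen : Subgroup.closure ({x, y} : Set G) = ⊤) :
    Nonempty (C4RtimesC4 ≃* G) := by
  have hsurj : Function.Surjective (lift hx hy hxy) := by
    rw [← MonoidHom.range_eq_top, eq_top_iff, ← hgen, Subgroup.closure_le]
    rintro _ (rfl | rfl)
    · exact ⟨mk 1 0, lift_mk_one_zero hx hy hxy⟩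
    · exact ⟨mk 0 1, lift_mk_zero_one hx hy hxy⟩
  exact ⟨MulEquiv.ofBijective _
    ((Fintype.bijective_iff_surjective_and_card _).mpr ⟨hsurj, hcard.symm⟩)⟩

end Lift

def connectionSet : Finset C4RtimesC4 := {mk 0 1, mk 0 3, mk 1 1, mk 1 3}

def adj : Matrix C4RtimesC4 C4RtimesC4 (ℤ√2) :=
  of fun a b => if a * b⁻¹ ∈ connectionSet then 1 else 0

def eigenvector (p : C4RtimesC4) : ℤ√2 :=
  if p.2.val % 2 = 0 then (if p.1.val ≤ 1 then -1 else 1)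
  else if p.1 = 0 then -sqrtd else if p.1 = 2 then sqrtd else 0

lemma adj_mulVec_eigenvector : adj *ᵥ eigenvector = (2 * sqrtd : ℤ√2) • eigenvector := by
  decide

noncomputable def sqrtTwoHom : ℤ√2 →+* ℝ :=
  Zsqrtd.lift ⟨√2, Real.mul_self_sqrt zero_le_two⟩

lemma cayleyAdjMatrix_connectionSet :
    cayleyAdjMatrix (connectionSet : Set C4RtimesC4) = adj.map sqrtTwoHom := by
  ext a b
  by_cases h : a * b⁻¹ ∈ connectionSet <;> simp [cayleyAdjMatrix, adj, h]

theorem not_isCayleyIntegral : ¬ IsCayleyIntegral C4RtimesC4 := by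
  have hv : sqrtTwoHom ∘ eigenvector ≠ 0 := fun h0 => by
    simpa [show eigenvector 1 = -1 by decide] using congr_fun h0 1
  have hμ := mem_spectrum_map_of_mulVec_eq_smul sqrtTwoHom hv adj_mulVec_eigenvector
  rw [← cayleyAdjMatrix_connectionSet] at hμ
  refine not_isCayleyIntegral_of_irrational_mem_spectrum
    (mod_cast (by decide : (1 : C4RtimesC4) ∉ connectionSet))
    (mod_cast (by decide : ∀ s ∈ connectionSet, s⁻¹ ∈ connectionSet)) hμ ?_
  simpa [sqrtTwoHom] using irrational_sqrt_two.natCast_mul two_ne_zero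

end C4RtimesC4

/-- A group of order 16 generated by elements `x, y` with `x⁴ = y⁴ = 1` and
`y⁻¹xy = x⁻¹` (i.e. `C₄ ⋊ C₄`) is not Cayley integral. -/
theorem c4_rtimes_c4_not_cayley_integral (G : Type*) [Group G] [Fintype G]
    (hcard : Fintype.card G = 16) (x y : G) (hx : x ^ 4 = 1) (hy : y ^ 4 = 1)
    (hxy : y⁻¹ * x * y = x⁻¹) (hgen : Subgroup.closure ({x, y} : Set G) = ⊤) :
    ¬ IsCayleyIntegral G := by
  obtain ⟨e⟩ := C4RtimesC4.nonempty_mulEquiv hcard hx hy hxy hgen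
  exact fun h => C4RtimesC4.not_isCayleyIntegral (h.of_mulEquiv e)
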